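/- arXiv:math/0301158 — 7 statements merged into one kernel-verified Lean document; each statement's English description precedes it below -/
import Mathlib

section
/- Let z1 ≠ 0 be a complex number. Define 2×2 complex matrices a1 = [[a1', 0],[0, z1]], a2 = [[a2', b'c''/z1],[−b''c'/z1, z2]], d = [[0,0],[0,1]], and vectors b = (b', b'')ᵗ with b', b'' ∈ ℂ^r (as rows/columns appropriately), c = (c', c'') with c', c'' ∈ ℂ^r, where a1', a2' ∈ ℂ, b'c'', b''c' ∈ ℂ denote the scalar products, and suppose c''·b'' = 0 (dot product zero). Then the integrability condition a1 d a2 − a2 d a1 + b c = 0 holds if and only if [a1', a2'] ∈ ℂ is zero and b'c' = 0, i.e. (viewing everything as 2×2 matrix identities) the configuration satisfies a1 d a2 − a2 d a1 + bc = 0. -/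
/-! Since `d = diag(0, 1)`, the term `a1 d a2 - a2 d a1` is off-diagonal, with entries
`-(a2)₀₁ z1` and `z1 (a2)₁₀`; the off-diagonal entries of `a2` are chosen so that these cancel
the off-diagonal entries of `bc`. What remains is `diag(b'·c', b''·c'')`, whose second entry
vanishes by hypothesis, while `[a1', a2']` vanishes because `ℂ` is commutative. -/

open Matrix

theorem diag_mul_proj_mul_sub_mul_proj_mul_diag {R : Type*} [CommRing R] (p z q u v w : R) :
    !![p, 0; 0, z] * !![0, 0; 0, 1] * !![q, u; v, w]
      - !![q, u; v, w] * !![0, 0; 0, 1] * !![p, 0; 0, z] = !![0, -(u * z); z * v, 0] := by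
  simp only [mul_fin_two, of_sub_of]
  ext i j
  fin_cases i <;> fin_cases j <;> simp [mul_comm]

theorem fin_two_diag_eq_zero_iff {α : Type*} [Zero α] (a b : α) :
    !![a, 0; 0, b] = 0 ↔ a = 0 ∧ b = 0 := by
  rw [← diagonal_vec2, diagonal_eq_zero]
  simp

/-- Canonical form over the ideal boundary: with `a1 = diag(a1', z1)`,
`a2 = [[a2', b'c''/z1],[−b''c'/z1, z2]]`, `d = diag(0,1)` and `c''·b'' = 0`,
the integrability condition `a1 d a2 − a2 d a1 + bc = 0` holds iff `b'·c' = 0`. -/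
theorem stmt2 {r : ℕ} (a1' a2' z1 z2 : ℂ) (hz1 : z1 ≠ 0)
    (b' b'' c' c'' : Fin r → ℂ) (h : c'' ⬝ᵥ b'' = 0) :
    let a1 : Matrix (Fin 2) (Fin 2) ℂ := !![a1', 0; 0, z1]
    let a2 : Matrix (Fin 2) (Fin 2) ℂ := !![a2', (b' ⬝ᵥ c'') / z1; -(b'' ⬝ᵥ c') / z1, z2]
    let d : Matrix (Fin 2) (Fin 2) ℂ := !![0, 0; 0, 1]
    let bc : Matrix (Fin 2) (Fin 2) ℂ := !![b' ⬝ᵥ c', b' ⬝ᵥ c''; b'' ⬝ᵥ c', b'' ⬝ᵥ c'']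
    (a1 * d * a2 - a2 * d * a1 + bc = 0 ↔ (a1' * a2' - a2' * a1' = 0 ∧ b' ⬝ᵥ c' = 0)) := by
  intro a1 a2 d bc
  have hdiag : a1 * d * a2 - a2 * d * a1 + bc = !![b' ⬝ᵥ c', 0; 0, b'' ⬝ᵥ c''] := by
    rw [diag_mul_proj_mul_sub_mul_proj_mul_diag, div_mul_cancel₀ _ hz1, mul_div_cancel₀ _ hz1,
      of_add_of]
    simp
  rw [hdiag, fin_two_diag_eq_zero_iff, dotProduct_comm b'', h, mul_comm a1', sub_self]
  simp
end

section
/- Let X, Y be topological spaces, and let M be the mapping-cylinder-type space obtained from the disjoint union of q copies of X × Y (labeled by cone points v_1,…,v_q) and X × C, where C is the cone on q points, glued by identifying (x, v_i) ∈ X × C with (ι(x), v_i) ∈ X × Y for a fixed map ι : X → X × Y of the form x ↦ (x, *) with * a basepoint. If Y is path-connected and well-pointed, then M is homotopy equivalent to X × (Y ∨ … ∨ Y) (q-fold wedge), where X × ⋁_i Y is the quotient of ⨆_i X × Y identifying (x, *, v_i) ∼ (x, *, v_j) for all i, j. -/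
open unitInterval

/-- The cone on `q` points: `([0,1] × {v_1,…,v_q}) / ((0,v_i) ∼ (0,v_j))`. -/
def ConeQ (q : ℕ) : Type :=
  Quot (fun (a b : I × Fin q) => a.1 = 0 ∧ b.1 = 0)

instance (q : ℕ) : TopologicalSpace (ConeQ q) :=
  instTopologicalSpaceQuot

/-- The mapping-cylinder-type space `M`: glue `⨆_i X × Y × {v_i}` to `X × C` by
identifying `(x, (1, v_i)) ∈ X × C` with `(ι(x), v_i) = (x, y₀, v_i)`. -/
def GlueM (X Y : Type) [TopologicalSpace X] [TopologicalSpace Y] (y₀ : Y) (q : ℕ) : Type :=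
  Quot (fun (a b : (X × Y × Fin q) ⊕ (X × ConeQ q)) =>
    ∃ (x : X) (i : Fin q),
      a = Sum.inl (x, y₀, i) ∧ b = Sum.inr (x, Quot.mk _ (1, i)))

instance (X Y : Type) [TopologicalSpace X] [TopologicalSpace Y] (y₀ : Y) (q : ℕ) :
    TopologicalSpace (GlueM X Y y₀ q) :=
  instTopologicalSpaceQuot

/-- `X × (Y ∨ ⋯ ∨ Y)`: the quotient of `⨆_i X × Y × {v_i}` identifying
`(x, y₀, v_i) ∼ (x, y₀, v_j)`. -/
def ProdWedge (X Y : Type) [TopologicalSpace X] [TopologicalSpace Y] (y₀ : Y) (q : ℕ) : Type :=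
  Quot (fun (a b : X × Y × Fin q) => ∃ (x : X) (i j : Fin q),
    a = (x, y₀, i) ∧ b = (x, y₀, j))

instance (X Y : Type) [TopologicalSpace X] [TopologicalSpace Y] (y₀ : Y) (q : ℕ) :
    TopologicalSpace (ProdWedge X Y y₀ q) :=
  instTopologicalSpaceQuot

/-!
Well-pointedness, applied to the inclusion of `Y` into `Y × {0} ∪ {y₀} × I` (`Y` with a whisker
attached at `y₀`), gives a homotopy `G_t` from this inclusion to a map `G_1` that pushes `y₀` to
the tip of the whisker. Laying the whisker over the `i`-th sheet along the `i`-th cone edge, tip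
at the cone vertex, `G_1` induces a map `X × ⋁ Y → M`. It is a homotopy inverse of the map
`M → X × ⋁ Y` collapsing the cone: both composites are deformed to the identity by `G_t` on the
sheets together with the radial contraction of the cone.
-/

open Topology Set Filter

section Whisker

variable {Y W Z : Type*} {y₀ : Y}

def withWhisker (y₀ : Y) : Set (Y × I) := {p | p.2 = 0 ∨ p.1 = y₀}

noncomputable def whiskerLift (u : W × Y → Z) (v : W × I → Z) (p : W × withWhisker y₀) : Z :=
  if p.2.1.2 = 0 then u (p.1, p.2.1.1) else v (p.1, p.2.1.2)

variable {u : W × Y → Z} {v : W × I → Z}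

theorem whiskerLift_of_eq_zero (p : W × withWhisker y₀) (hp : p.2.1.2 = 0) :
    whiskerLift u v p = u (p.1, p.2.1.1) := if_pos hp

theorem whiskerLift_of_ne_zero (p : W × withWhisker y₀) (hp : p.2.1.2 ≠ 0) :
    whiskerLift u v p = v (p.1, p.2.1.2) := if_neg hp

theorem whiskerLift_of_eq_base (huv : ∀ w, u (w, y₀) = v (w, 0)) (p : W × withWhisker y₀)
    (hp : p.2.1.1 = y₀) : whiskerLift u v p = v (p.1, p.2.1.2) := by
  by_cases hs : p.2.1.2 = 0
  · rw [whiskerLift_of_eq_zero p hs, hp, hs, huv]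
  · exact whiskerLift_of_ne_zero p hs

variable [TopologicalSpace Y] [TopologicalSpace W] [TopologicalSpace Z]

theorem continuous_whiskerLift (hu : Continuous u) (hv : Continuous v)
    (huv : ∀ w, u (w, y₀) = v (w, 0)) : Continuous (whiskerLift (y₀ := y₀) u v) := by
  have hv' : Continuous fun p : W × withWhisker y₀ => v (p.1, p.2.1.2) := by fun_prop
  refine continuous_iff_continuousAt.2 fun P => ?_
  by_cases hs : P.2.1.2 = 0
  · let A : Set (W × withWhisker y₀) := {p | p.2.1.2 = 0}
    let B : Set (W × withWhisker y₀) := {p | p.2.1.1 = y₀}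
    have hAB : A ∪ B = univ := eq_univ_of_forall fun p => p.2.2
    rw [← continuousWithinAt_univ, ← hAB]
    refine ContinuousWithinAt.union ?_ ?_
    · exact ((hu.comp (by fun_prop)).continuousOn.congr
        fun p hp => whiskerLift_of_eq_zero p hp).continuousWithinAt hs
    by_cases hPB : P ∈ closure B
    · -- `{y₀}` need not be closed: the whisker accumulates exactly at specializations of `y₀`
      have hy₀ : y₀ ⤳ P.2.1.1 := specializes_iff_mem_closure.2 <|
        map_mem_closure (f := fun p : W × withWhisker y₀ => p.2.1.1) (t := {y₀})
          (by fun_prop) hPB fun p hp => hp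
      have hlim : v (P.1, P.2.1.2) ⤳ whiskerLift u v P := by
        rw [whiskerLift_of_eq_zero P hs, hs, ← huv]
        exact (specializes_rfl.prod hy₀).map hu
      exact ((hv'.continuousWithinAt (s := B)).tendsto.congr' (eventuallyEq_nhdsWithin_of_eqOn
        fun p hp => (whiskerLift_of_eq_base huv p hp).symm)).mono_right hlim
    · rw [ContinuousWithinAt, notMem_closure_iff_nhdsWithin_eq_bot.1 hPB]
      exact tendsto_bot
  · have hopen : IsOpen {p : W × withWhisker y₀ | p.2.1.2 ≠ 0} :=
      isOpen_ne_fun (by fun_prop) continuous_const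
    exact hv'.continuousAt.congr (eventuallyEq_of_mem (hopen.mem_nhds hs)
      fun p hp => (whiskerLift_of_ne_zero p hp).symm)

end Whisker

namespace ContinuousMap

variable {X Y : Type*} [TopologicalSpace X] [TopologicalSpace Y]

theorem Homotopic.of_curried {f₀ f₁ : C(X, Y)} (H : C(X, C(I, Y))) (h₀ : ∀ x, H x 0 = f₀ x)
    (h₁ : ∀ x, H x 1 = f₁ x) : f₀.Homotopic f₁ :=
  ⟨{ toContinuousMap := H.uncurry.comp ⟨Prod.swap, continuous_swap⟩
     map_zero_left := h₀
     map_one_left := h₁ }⟩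

end ContinuousMap

namespace ConeQ

variable {q : ℕ}

def mk (t : I) (i : Fin q) : ConeQ q := Quot.mk _ (t, i)

theorem mk_zero (i j : Fin q) : mk 0 i = mk 0 j := Quot.sound ⟨rfl, rfl⟩

theorem continuous_mk : Continuous fun p : I × Fin q => mk p.1 p.2 := continuous_quot_mk

def toPlane : ConeQ q → ℝ × ℝ :=
  Quot.lift (fun p => ((p.1 : ℝ), p.1 * (p.2 : ℕ))) <| by
    rintro ⟨t, i⟩ ⟨s, j⟩ ⟨rfl, rfl⟩
    simp

theorem toPlane_injective : Function.Injective (toPlane (q := q)) := by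
  rintro ⟨t, i⟩ ⟨s, j⟩ h
  obtain ⟨hts, hij⟩ := Prod.mk.inj h
  obtain rfl : t = s := Subtype.ext hts
  rcases eq_or_ne t 0 with rfl | ht
  · exact mk_zero i j
  · obtain rfl : i = j :=
      Fin.ext (Nat.cast_injective (mul_left_cancel₀ (Subtype.coe_ne_coe.2 ht) hij))
    rfl

instance : T2Space (ConeQ q) :=
  .of_injective_continuous toPlane_injective (continuous_quot_lift _ (by fun_prop))

theorem isQuotientMap_prodMap_mk (X : Type*) [TopologicalSpace X] :
    IsQuotientMap
      (Prod.map id fun p : I × Fin q => mk p.1 p.2 : X × (I × Fin q) → X × ConeQ q) := by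
  have hproper : IsProperMap (Prod.map id fun p : I × Fin q => mk p.1 p.2 : X × _ → _) :=
    isProperMap_id.prodMap continuous_mk.isProperMap
  refine hproper.isClosedMap.isQuotientMap hproper.continuous ?_
  rintro ⟨x, ⟨t, i⟩⟩
  exact ⟨(x, t, i), rfl⟩

end ConeQ

namespace GlueM

variable {X Y Z : Type} [TopologicalSpace X] [TopologicalSpace Y] [TopologicalSpace Z]
  {y₀ : Y} {q : ℕ}

def sheet (x : X) (y : Y) (i : Fin q) : GlueM X Y y₀ q := Quot.mk _ (.inl (x, y, i))

def cone (x : X) (t : I) (i : Fin q) : GlueM X Y y₀ q := Quot.mk _ (.inr (x, ConeQ.mk t i))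

theorem sheet_base (x : X) (i : Fin q) : (sheet x y₀ i : GlueM X Y y₀ q) = cone x 1 i :=
  Quot.sound ⟨x, i, rfl, rfl⟩

theorem cone_zero (x : X) (i j : Fin q) : (cone x 0 i : GlueM X Y y₀ q) = cone x 0 j := by
  rw [cone, ConeQ.mk_zero i j, cone]

@[elab_as_elim]
theorem ind {P : GlueM X Y y₀ q → Prop} (sheet : ∀ x y i, P (sheet x y i))
    (cone : ∀ x t i, P (cone x t i)) (m : GlueM X Y y₀ q) : P m := by
  induction m using Quot.ind with | _ a =>
  rcases a with ⟨x, y, i⟩ | ⟨x, ⟨t, i⟩⟩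
  exacts [sheet x y i, cone x t i]

theorem continuous_sheet :
    Continuous fun p : X × Y × Fin q => (sheet p.1 p.2.1 p.2.2 : GlueM X Y y₀ q) :=
  continuous_quot_mk.comp continuous_inl

theorem continuous_cone :
    Continuous fun p : X × I × Fin q => (cone p.1 p.2.1 p.2.2 : GlueM X Y y₀ q) :=
  continuous_quot_mk.comp (continuous_inr.comp ((ConeQ.isQuotientMap_prodMap_mk X).continuous))

def lift (f : C(X × Y × Fin q, Z)) (g : C(X × I × Fin q, Z))
    (hg : ∀ x i j, g (x, 0, i) = g (x, 0, j)) (hfg : ∀ x i, f (x, y₀, i) = g (x, 1, i)) :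
    C(GlueM X Y y₀ q, Z) where
  toFun := Quot.lift
    (Sum.elim f fun p => Quot.lift (fun c : I × Fin q => g (p.1, c)) (fun c c' ⟨hc, hc'⟩ => by
      rw [← Prod.mk.eta (p := c), ← Prod.mk.eta (p := c'), hc, hc', hg]) p.2)
    (by rintro _ _ ⟨x, i, rfl, rfl⟩; exact hfg x i)
  continuous_toFun := by
    refine continuous_quot_lift _ (f.continuous.sumElim ?_)
    exact (ConeQ.isQuotientMap_prodMap_mk X).continuous_iff.2 g.continuous

variable {f : C(X × Y × Fin q, Z)} {g : C(X × I × Fin q, Z)}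
  {hg : ∀ x i j, g (x, 0, i) = g (x, 0, j)} {hfg : ∀ x i, f (x, y₀, i) = g (x, 1, i)}

@[simp]
theorem lift_sheet (x : X) (y : Y) (i : Fin q) : lift f g hg hfg (sheet x y i) = f (x, y, i) :=
  rfl

@[simp]
theorem lift_cone (x : X) (t : I) (i : Fin q) : lift f g hg hfg (cone x t i) = g (x, t, i) :=
  rfl

end GlueM

namespace ProdWedge

variable {X Y Z : Type} [TopologicalSpace X] [TopologicalSpace Y] [TopologicalSpace Z]
  {y₀ : Y} {q : ℕ}

def mk (x : X) (y : Y) (i : Fin q) : ProdWedge X Y y₀ q := Quot.mk _ (x, y, i)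

theorem mk_base (x : X) (i j : Fin q) : (mk x y₀ i : ProdWedge X Y y₀ q) = mk x y₀ j :=
  Quot.sound ⟨x, i, j, rfl, rfl⟩

@[elab_as_elim]
theorem ind {P : ProdWedge X Y y₀ q → Prop} (mk : ∀ x y i, P (mk x y i))
    (w : ProdWedge X Y y₀ q) : P w := by
  induction w using Quot.ind with | _ a =>
  exact mk a.1 a.2.1 a.2.2

theorem continuous_mk :
    Continuous fun p : X × Y × Fin q => (mk p.1 p.2.1 p.2.2 : ProdWedge X Y y₀ q) :=
  continuous_quot_mk

def lift (f : C(X × Y × Fin q, Z)) (hf : ∀ x i j, f (x, y₀, i) = f (x, y₀, j)) :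
    C(ProdWedge X Y y₀ q, Z) where
  toFun := Quot.lift f (by rintro _ _ ⟨x, i, j, rfl, rfl⟩; exact hf x i j)
  continuous_toFun := continuous_quot_lift _ f.continuous

@[simp]
theorem lift_mk {f : C(X × Y × Fin q, Z)} {hf : ∀ x i j, f (x, y₀, i) = f (x, y₀, j)}
    (x : X) (y : Y) (i : Fin q) : lift f hf (mk x y i) = f (x, y, i) :=
  rfl

end ProdWedge

section Deformation

variable {X Y : Type} [TopologicalSpace X] [TopologicalSpace Y] {y₀ : Y} {q : ℕ}
  {G : C(I × Y, withWhisker y₀)} (hG : ∀ t, (G (t, y₀) : Y × I) = (y₀, t))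

namespace GlueM

def collapse : C(GlueM X Y y₀ q, ProdWedge X Y y₀ q) :=
  lift ⟨_, ProdWedge.continuous_mk⟩ ⟨fun p => ProdWedge.mk p.1 y₀ p.2.2,
    ProdWedge.continuous_mk.comp (f := fun p : X × I × Fin q => (p.1, y₀, p.2.2)) (by fun_prop)⟩
    (fun x i j => ProdWedge.mk_base x i j) fun _ _ => rfl

/-- The whisker `{y₀} × I` is laid along a cone edge, from its base (cone parameter `1`) to the
vertex (cone parameter `0`). -/
noncomputable def ofWhisker : C((X × Fin q) × withWhisker y₀, GlueM X Y y₀ q) :=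
  ⟨whiskerLift (fun p => sheet p.1.1 p.2 p.1.2) (fun p => cone p.1.1 (σ p.2) p.1.2),
    continuous_whiskerLift
      (continuous_sheet.comp (f := fun p : (X × Fin q) × Y => (p.1.1, p.2, p.1.2)) (by fun_prop))
      (continuous_cone.comp (f := fun p : (X × Fin q) × I => (p.1.1, σ p.2, p.1.2)) (by fun_prop))
      fun _ => by rw [unitInterval.symm_zero, sheet_base]⟩

theorem ofWhisker_of_eq_zero (x : X) (i : Fin q) (y : Y) (p : withWhisker y₀)
    (hp : (p : Y × I) = (y, 0)) : ofWhisker ((x, i), p) = sheet x y i := by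
  rw [ofWhisker, ContinuousMap.coe_mk, whiskerLift_of_eq_zero _ (by simp [hp]), hp]

theorem ofWhisker_of_eq_base (x : X) (i : Fin q) (t : I) (p : withWhisker y₀)
    (hp : (p : Y × I) = (y₀, t)) : ofWhisker ((x, i), p) = cone x (σ t) i := by
  rw [ofWhisker, ContinuousMap.coe_mk,
    whiskerLift_of_eq_base (fun _ => by rw [unitInterval.symm_zero, sheet_base]) _ (by simp [hp]),
    hp]

variable (G) in
noncomputable def sheetHomotopy : C(X × Y × Fin q, C(I, GlueM X Y y₀ q)) :=
  ContinuousMap.curry <| ofWhisker.comp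
    ⟨fun p => ((p.1.1, p.1.2.2), G (p.2, p.1.2.1)), by fun_prop⟩

variable (G) in
theorem sheetHomotopy_apply (x : X) (y : Y) (i : Fin q) (s : I) :
    sheetHomotopy G (x, y, i) s = ofWhisker ((x, i), G (s, y)) :=
  rfl

def coneContraction : C(X × I × Fin q, C(I, GlueM X Y y₀ q)) :=
  ContinuousMap.curry ⟨fun p => cone p.1.1 (σ p.2 * p.1.2.1) p.1.2.2,
    continuous_cone.comp (f := fun p : (X × I × Fin q) × I => (p.1.1, σ p.2 * p.1.2.1, p.1.2.2))
      (by fun_prop)⟩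

noncomputable def deformation : C(GlueM X Y y₀ q, C(I, GlueM X Y y₀ q)) :=
  lift (sheetHomotopy G) coneContraction
    (fun x i j => ContinuousMap.ext fun s => by simp [coneContraction, cone_zero x i j])
    fun x i => ContinuousMap.ext fun s => by
      simp [sheetHomotopy_apply, coneContraction, ofWhisker_of_eq_base x i s _ (hG s)]

end GlueM

namespace ProdWedge

noncomputable def toGlueM : C(ProdWedge X Y y₀ q, GlueM X Y y₀ q) :=
  lift ⟨fun p => GlueM.sheetHomotopy G p 1, by fun_prop⟩ fun x i j => by
    simp [GlueM.sheetHomotopy_apply, GlueM.ofWhisker_of_eq_base x _ 1 _ (hG 1),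
      GlueM.cone_zero x i j]

noncomputable def deformation : C(ProdWedge X Y y₀ q, C(I, ProdWedge X Y y₀ q)) :=
  lift ⟨fun p => GlueM.collapse.comp (GlueM.sheetHomotopy G p),
      (ContinuousMap.continuous_postcomp _).comp (GlueM.sheetHomotopy G).continuous⟩
    fun x i j => ContinuousMap.ext fun s => by
      simp [GlueM.sheetHomotopy_apply, GlueM.ofWhisker_of_eq_base x _ s _ (hG s), GlueM.collapse,
        mk_base x i j]

end ProdWedge

theorem GlueM.id_homotopic_toGlueM_comp_collapse (hG₀ : ∀ y, (G (0, y) : Y × I) = (y, 0)) :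
    (ContinuousMap.id (GlueM X Y y₀ q)).Homotopic ((ProdWedge.toGlueM hG).comp collapse) := by
  refine .of_curried (deformation hG) (fun m => ?_) fun m => ?_ <;> induction m using ind
  · simp [deformation, sheetHomotopy_apply, ofWhisker_of_eq_zero _ _ _ _ (hG₀ _)]
  · simp [deformation, coneContraction]
  · rfl
  · simp [deformation, coneContraction, collapse, ProdWedge.toGlueM, sheetHomotopy_apply,
      ofWhisker_of_eq_base _ _ 1 _ (hG 1)]

theorem ProdWedge.id_homotopic_collapse_comp_toGlueM (hG₀ : ∀ y, (G (0, y) : Y × I) = (y, 0)) :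
    (ContinuousMap.id (ProdWedge X Y y₀ q)).Homotopic (GlueM.collapse.comp (toGlueM hG)) := by
  refine .of_curried (deformation hG) (fun w => ?_) fun w => ?_ <;> induction w using ind
  · simp [deformation, GlueM.sheetHomotopy_apply, GlueM.ofWhisker_of_eq_zero _ _ _ _ (hG₀ _),
      GlueM.collapse]
  · rfl

end Deformation

theorem stmt8_general (X Y : Type) [TopologicalSpace X] [TopologicalSpace Y] (y₀ : Y) (q : ℕ)
    (hwp : ∀ (Z : Type) [TopologicalSpace Z] (f : C(Y, Z)) (g : C(I, Z)),
      g 0 = f y₀ → ∃ G : C(I × Y, Z), (∀ y, G (0, y) = f y) ∧ (∀ t, G (t, y₀) = g t)) :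
    Nonempty (ContinuousMap.HomotopyEquiv (GlueM X Y y₀ q) (ProdWedge X Y y₀ q)) := by
  obtain ⟨G, hG₀, hG⟩ := hwp (withWhisker y₀) ⟨fun y => ⟨(y, 0), .inl rfl⟩, by fun_prop⟩
    ⟨fun t => ⟨(y₀, t), .inr rfl⟩, by fun_prop⟩ rfl
  have hG₀' (y : Y) : (G (0, y) : Y × I) = (y, 0) := congrArg Subtype.val (hG₀ y)
  have hG' (t : I) : (G (t, y₀) : Y × I) = (y₀, t) := congrArg Subtype.val (hG t)
  exact ⟨{ toFun := GlueM.collapse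
           invFun := ProdWedge.toGlueM hG'
           left_inv := (GlueM.id_homotopic_toGlueM_comp_collapse hG' hG₀').symm
           right_inv := (ProdWedge.id_homotopic_collapse_comp_toGlueM hG' hG₀').symm }⟩

/-- If `Y` is path-connected and well-pointed at `y₀` (homotopy extension property for the
pair `(Y, {y₀})`), then the glued space `M` is homotopy equivalent to
`X × (Y ∨ ⋯ ∨ Y)` (q-fold wedge). -/
theorem stmt8 (X Y : Type) [TopologicalSpace X] [TopologicalSpace Y] (y₀ : Y) (q : ℕ)
    (hconn : PathConnectedSpace Y)
    (hwp : ∀ (Z : Type) [TopologicalSpace Z] (f : C(Y, Z)) (g : C(I, Z)),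
      g 0 = f y₀ → ∃ G : C(I × Y, Z), (∀ y, G (0, y) = f y) ∧ (∀ t, G (t, y₀) = g t)) :
    Nonempty (ContinuousMap.HomotopyEquiv (GlueM X Y y₀ q) (ProdWedge X Y y₀ q)) :=
  stmt8_general X Y y₀ q hwp
end

section
/- Let K, K_{AL}, K_{AR}, K_{NL}, K_{NR}, K_C, P be graded abelian groups, with P = ℤ[a1,a2] and Q = ℤ[n_L,n_R] graded polynomial rings, and maps s : P → Q, s_L : K_{AL} → K_{NL}, s_R : K_{AR} → K_{NR} graded homomorphisms with s injective. Define d_0 : (P ⊕ K_{AL}) ⊕ (P ⊕ K_{AR}) ⊕ (Q ⊕ K_{NL} ⊕ K_{NR} ⊕ K_C) → (Q ⊕ K_{NL}) ⊕ (Q ⊕ K_{NR}) ⊕ P by d_0(a_L + k_{AL}, a_R + k_{AR}, x + k_{NL} + k_{NR} + k_C) = (−s(a_L) − s_L(k_{AL}) + x + k_{NL}, −s(a_R) − s_R(k_{AR}) − x − k_{NR}, a_L + a_R). Then the map P ⊕ K_{AL} ⊕ K_{AR} ⊕ K_C → Ker(d_0) given by (a, k_{AL}, k_{AR}, k_C)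 ↦ (a + k_{AL}, −a + k_{AR}, s(a) + s_L(k_{AL}) − s_R(k_{AR}) + k_C) is an isomorphism of graded abelian groups onto Ker(d_0). -/
/-! A vector `((a_L, k_AL), (a_R, k_AR), (x, k_NL, k_NR, k_C))` lies in `ker d₀` exactly when
`a_R = -a_L`, `x = s a_L`, `k_NL = s_L k_AL` and `k_NR = -s_R k_AR`; so it is determined by the
free coordinates `(a_L, k_AL, k_AR, k_C)`, which the parametrization reads back off. -/

namespace SplitKernel

variable {P Q KAL KNL KAR KNR KC : Type*} [AddCommGroup P] [AddCommGroup Q]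
  [AddCommGroup KAL] [AddCommGroup KNL] [AddCommGroup KAR] [AddCommGroup KNR]
  (s : P →+ Q) (sL : KAL →+ KNL) (sR : KAR →+ KNR)

def d0 (v : (P × KAL) × (P × KAR) × (Q × KNL × KNR × KC)) : (Q × KNL) × (Q × KNR) × P :=
  ((-s v.1.1 + v.2.2.1, -sL v.1.2 + v.2.2.2.1),
   (-s v.2.1.1 - v.2.2.1, -sR v.2.1.2 - v.2.2.2.2.1),
   v.1.1 + v.2.1.1)

def param (w : P × KAL × KAR × KC) : (P × KAL) × (P × KAR) × (Q × KNL × KNR × KC) :=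
  ((w.1, w.2.1), (-w.1, w.2.2.1), (s w.1, sL w.2.1, -sR w.2.2.1, w.2.2.2))

theorem param_injective : Function.Injective (param (KC := KC) s sL sR) := by
  rintro ⟨a, kAL, kAR, kC⟩ ⟨a', kAL', kAR', kC'⟩ h
  simp only [param, Prod.mk.injEq] at h
  obtain ⟨⟨rfl, rfl⟩, ⟨-, rfl⟩, -, -, -, rfl⟩ := h
  rfl

theorem d0_param (w : P × KAL × KAR × KC) : d0 s sL sR (param s sL sR w) = 0 := by
  simp [d0, param]

theorem eq_param_of_d0_eq_zero {v : (P × KAL) × (P × KAR) × (Q × KNL × KNR × KC)}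
    (hv : d0 s sL sR v = 0) : v = param s sL sR (v.1.1, v.1.2, v.2.1.2, v.2.2.2.2.2) := by
  obtain ⟨⟨aL, kAL⟩, ⟨aR, kAR⟩, x, kNL, kNR, kC⟩ := v
  simp only [d0, Prod.mk_eq_zero] at hv
  obtain ⟨⟨hx, hNL⟩, ⟨-, hNR⟩, hR⟩ := hv
  simp only [param, Prod.mk.injEq, true_and, and_true]
  refine ⟨eq_neg_of_add_eq_zero_right hR, ?_, ?_, ?_⟩
  · exact (neg_add_eq_zero.mp hx).symm
  · exact (neg_add_eq_zero.mp hNL).symm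
  · exact (sub_eq_zero.mp hNR).symm

theorem range_param : Set.range (param (KC := KC) s sL sR) = {v | d0 s sL sR v = 0} := by
  ext v
  refine ⟨?_, fun hv => ⟨_, (eq_param_of_d0_eq_zero s sL sR hv).symm⟩⟩
  rintro ⟨w, rfl⟩
  exact d0_param s sL sR w

end SplitKernel

theorem stmt12_general (KAL KNL KAR KNR KC : Type)
    [AddCommGroup KAL] [AddCommGroup KNL] [AddCommGroup KAR] [AddCommGroup KNR]
    [AddCommGroup KC]
    (s : MvPolynomial (Fin 2) ℤ →+ MvPolynomial (Fin 2) ℤ)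
    (sL : KAL →+ KNL) (sR : KAR →+ KNR) :
    let P := MvPolynomial (Fin 2) ℤ
    let Q := MvPolynomial (Fin 2) ℤ
    let d0 : (P × KAL) × (P × KAR) × (Q × KNL × KNR × KC) →
        (Q × KNL) × (Q × KNR) × P := fun v =>
      ((-s v.1.1 + v.2.2.1, -sL v.1.2 + v.2.2.2.1),
       (-s v.2.1.1 - v.2.2.1, -sR v.2.1.2 - v.2.2.2.2.1),
       v.1.1 + v.2.1.1)
    let φ : P × KAL × KAR × KC → (P × KAL) × (P × KAR) × (Q × KNL × KNR × KC) := fun w =>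
      ((w.1, w.2.1), (-w.1, w.2.2.1), (s w.1, sL w.2.1, -sR w.2.2.1, w.2.2.2))
    Function.Injective φ ∧ Set.range φ = {v | d0 v = 0} :=
  ⟨SplitKernel.param_injective s sL sR, SplitKernel.range_param s sL sR⟩

/-- The kernel computation for `d_0 = d_1 : E_1^{0,·} → E_1^{1,·}` in the spectral sequence
for `𝔐₂(X₂)`: with `P = ℤ[a1,a2]`, `Q = ℤ[n_L,n_R]`, `s : P → Q` injective and
`s_L : K_{AL} → K_{NL}`, `s_R : K_{AR} → K_{NR}`, the map
`(a, k_{AL}, k_{AR}, k_C) ↦ (a + k_{AL}, −a + k_{AR}, s(a) + s_L(k_{AL}) − s_R(k_{AR}) + k_C)`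
is an isomorphism of `P ⊕ K_{AL} ⊕ K_{AR} ⊕ K_C` onto `ker d_0`. -/
theorem stmt12 (KAL KNL KAR KNR KC : Type)
    [AddCommGroup KAL] [AddCommGroup KNL] [AddCommGroup KAR] [AddCommGroup KNR]
    [AddCommGroup KC]
    (s : MvPolynomial (Fin 2) ℤ →+ MvPolynomial (Fin 2) ℤ) (hs : Function.Injective s)
    (sL : KAL →+ KNL) (sR : KAR →+ KNR) :
    let P := MvPolynomial (Fin 2) ℤ
    let Q := MvPolynomial (Fin 2) ℤ
    let d0 : (P × KAL) × (P × KAR) × (Q × KNL × KNR × KC) →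
        (Q × KNL) × (Q × KNR) × P := fun v =>
      ((-s v.1.1 + v.2.2.1, -sL v.1.2 + v.2.2.2.1),
       (-s v.2.1.1 - v.2.2.1, -sR v.2.1.2 - v.2.2.2.2.1),
       v.1.1 + v.2.1.1)
    let φ : P × KAL × KAR × KC → (P × KAL) × (P × KAR) × (Q × KNL × KNR × KC) := fun w =>
      ((w.1, w.2.1), (-w.1, w.2.2.1), (s w.1, sL w.2.1, -sR w.2.2.1, w.2.2.2))
    Function.Injective φ ∧ Set.range φ = {v | d0 v = 0} :=
  stmt12_general KAL KNL KAR KNR KC s sL sR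
end

section
/- With notation as before, define d_1 : (Q ⊕ K_{NL}) ⊕ (Q ⊕ K_{NR}) ⊕ P → Q by d_1(x_L + k_{NL}, x_R + k_{NR}, a) = x_L + x_R + s(a). Then d_1 is surjective, and Ker(d_1) = Im(d_0) where d_0 is the map of the previous statement; that is, the three-term complex is exact at the middle term. -/
theorem stmt13_general (KAL KNL KAR KNR KC : Type)
    [AddCommGroup KAL] [AddCommGroup KNL] [AddCommGroup KAR] [AddCommGroup KNR]
    [AddCommGroup KC]
    (s : MvPolynomial (Fin 2) ℤ →+ MvPolynomial (Fin 2) ℤ)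
    (sL : KAL →+ KNL) (sR : KAR →+ KNR) :
    let P := MvPolynomial (Fin 2) ℤ
    let Q := MvPolynomial (Fin 2) ℤ
    let d0 : (P × KAL) × (P × KAR) × (Q × KNL × KNR × KC) →
        (Q × KNL) × (Q × KNR) × P := fun v =>
      ((-s v.1.1 + v.2.2.1, -sL v.1.2 + v.2.2.2.1),
       (-s v.2.1.1 - v.2.2.1, -sR v.2.1.2 - v.2.2.2.2.1),
       v.1.1 + v.2.1.1)
    let d1 : (Q × KNL) × (Q × KNR) × P → Q := fun v => v.1.1 + v.2.1.1 + s v.2.2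
    Function.Surjective d1 ∧ {v | d1 v = 0} = Set.range d0 := by
  intro P Q d0 d1
  refine ⟨fun q => ⟨((q, 0), (0, 0), 0), by simp [d1]⟩, Set.ext fun v => ⟨?_, ?_⟩⟩
  · rintro (hv : v.1.1 + v.2.1.1 + s v.2.2 = 0)
    -- all of `a` goes into the left `P`-factor; by `hv`, `x_R = -(x_L + s a)`, so the
    -- `Q`-component `x_L + s a` of the last factor produces both `x_L` and `x_R`
    refine ⟨((v.2.2, 0), (0, 0), (v.1.1 + s v.2.2, v.1.2, -v.2.1.2, 0)), ?_⟩
    have hxR : -s 0 - (v.1.1 + s v.2.2) = v.2.1.1 := by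
      rw [map_zero]
      linear_combination -hv
    simp only [d0]
    exact Prod.ext (Prod.ext (by simp) (by simp)) (Prod.ext (Prod.ext hxR (by simp)) (by simp))
  · rintro ⟨w, rfl⟩
    change (-s w.1.1 + w.2.2.1) + (-s w.2.1.1 - w.2.2.1) + s (w.1.1 + w.2.1.1) = 0
    rw [map_add]
    abel

/-- Exactness in the middle and surjectivity of `d_1 : E_1^{1,·} → E_1^{2,·}` for the
spectral sequence of `𝔐₂(X₂)`: with `d_1(x_L + k_{NL}, x_R + k_{NR}, a) = x_L + x_R + s(a)`,
`d_1` is surjective and `ker d_1 = im d_0`. -/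
theorem stmt13 (KAL KNL KAR KNR KC : Type)
    [AddCommGroup KAL] [AddCommGroup KNL] [AddCommGroup KAR] [AddCommGroup KNR]
    [AddCommGroup KC]
    (s : MvPolynomial (Fin 2) ℤ →+ MvPolynomial (Fin 2) ℤ) (hs : Function.Injective s)
    (sL : KAL →+ KNL) (sR : KAR →+ KNR) :
    let P := MvPolynomial (Fin 2) ℤ
    let Q := MvPolynomial (Fin 2) ℤ
    let d0 : (P × KAL) × (P × KAR) × (Q × KNL × KNR × KC) →
        (Q × KNL) × (Q × KNR) × P := fun v =>
      ((-s v.1.1 + v.2.2.1, -sL v.1.2 + v.2.2.2.1),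
       (-s v.2.1.1 - v.2.2.1, -sR v.2.1.2 - v.2.2.2.2.1),
       v.1.1 + v.2.1.1)
    let d1 : (Q × KNL) × (Q × KNR) × P → Q := fun v => v.1.1 + v.2.1.1 + s v.2.2
    Function.Surjective d1 ∧ {v | d1 v = 0} = Set.range d0 :=
  stmt13_general KAL KNL KAR KNR KC s sL sR
end

section
/- Let z1 ≠ 0 and consider the family of 2×2 matrices a1(t) = [[a1', 0],[0, t²·z1 + (1−t²)·z1]], together with the charge-2 gluing map ⊞_L sending a pair ((a1', a2', d', b', c'), (a1'', a2'', b'', c'')) with |a1''− z1| < δ and d'·a1' ≠ a1'' to the 5-tuple a1 = diag(a1', a1''), a2 = [[a2', b'c''/(a1''−d'a1')],[b''c'/(d'a1'−a1''), a2'']], d = diag(d', 1), b = (b', b'')ᵗ, c = (c', c''). Then the resulting data satisfies the blow-up integrability condition a1 d a2 − a2 d a1 + bc = 0 provided the two input data satisfy their respective integrability conditions ([a1'', a2''] + b''c'' = 0 trivially in the scalar case, and a1'd'a2' − a2'd'a1' + b'c' = 0), and b·c has off-diagonal entries b'c'' and b''c' while the diagonal entries are b'c' and b''c''. -/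
open Matrix

/-
With `a1 = diag(α)` and `d = diag(δ)` diagonal, the integrability expression
`a1 d a2 − a2 d a1 + bc` has `(i, j)` entry `(αᵢδᵢ − αⱼδⱼ) (a2)ᵢⱼ + (bc)ᵢⱼ`.
On the diagonal the first term vanishes and `(bc)ᵢᵢ` is `b'·c'` or `b''·c''`, both zero;
off the diagonal the entries of `a2` are chosen as `−(bc)ᵢⱼ / (αᵢδᵢ − αⱼδⱼ)`, which is
where `d'a1' ≠ a1''` is needed.
-/

theorem diagonal_mul_diagonal_mul_sub_mul_diagonal_mul_diagonal_apply
    {n R : Type*} [Fintype n] [DecidableEq n] [CommRing R]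
    (α δ : n → R) (A : Matrix n n R) (i j : n) :
    (diagonal α * diagonal δ * A - A * diagonal δ * diagonal α) i j =
      (α i * δ i - α j * δ j) * A i j := by
  rw [Matrix.sub_apply, diagonal_mul_diagonal, mul_assoc A, diagonal_mul_diagonal, diagonal_mul,
    mul_diagonal]
  ring

theorem of_mul_transpose_of_apply {l m n R : Type*} [Fintype n] [Mul R] [AddCommMonoid R]
    (f : l → n → R) (g : m → n → R) (i : l) (j : m) :
    (of f * (of g)ᵀ) i j = f i ⬝ᵥ g j :=
  rfl

theorem sub_mul_div_sub_add_self {K : Type*} [Field K] {x y : K} (h : x ≠ y) (p : K) :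
    (x - y) * (p / (y - x)) + p = 0 := by
  rw [← neg_sub y x, neg_mul, mul_div_cancel₀ p (sub_ne_zero.mpr h.symm), neg_add_cancel]

theorem stmt15_general {r : ℕ}
    (a1' a2' d' a1'' a2'' : ℂ)
    (hne : d' * a1' ≠ a1'')
    (b' b'' c' c'' : Fin r → ℂ)
    (h' : b' ⬝ᵥ c' = 0) (h'' : b'' ⬝ᵥ c'' = 0) :
    let a1 : Matrix (Fin 2) (Fin 2) ℂ := !![a1', 0; 0, a1'']
    let a2 : Matrix (Fin 2) (Fin 2) ℂ :=
      !![a2', (b' ⬝ᵥ c'') / (a1'' - d' * a1');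
         (b'' ⬝ᵥ c') / (d' * a1' - a1''), a2'']
    let d : Matrix (Fin 2) (Fin 2) ℂ := !![d', 0; 0, 1]
    let b : Matrix (Fin 2) (Fin r) ℂ := Matrix.of ![b', b'']
    let c : Matrix (Fin r) (Fin 2) ℂ := (Matrix.of ![c', c''])ᵀ
    a1 * d * a2 - a2 * d * a1 + b * c = 0 ∧
      (b * c) 0 1 = b' ⬝ᵥ c'' ∧ (b * c) 1 0 = b'' ⬝ᵥ c' ∧
      (b * c) 0 0 = b' ⬝ᵥ c' ∧ (b * c) 1 1 = b'' ⬝ᵥ c'' := by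
  intro a1 a2 d b c
  have hbc (i j : Fin 2) : (b * c) i j = ![b', b''] i ⬝ᵥ ![c', c''] j :=
    of_mul_transpose_of_apply _ _ i j
  refine ⟨?_, hbc 0 1, hbc 1 0, hbc 0 0, hbc 1 1⟩
  have ha1 : a1 = diagonal ![a1', a1''] := (diagonal_vec2 _ _).symm
  have hd : d = diagonal ![d', 1] := (diagonal_vec2 _ _).symm
  ext i j
  rw [Matrix.add_apply, ha1, hd,
    diagonal_mul_diagonal_mul_sub_mul_diagonal_mul_diagonal_apply, hbc]
  fin_cases i <;> fin_cases j <;>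
    simp only [a2, Fin.isValue, Fin.zero_eta, Fin.mk_one, of_apply, cons_val', cons_val_zero,
      cons_val_one, cons_val_fin_one, mul_one, sub_self, zero_mul, zero_add, h', h'',
      Matrix.zero_apply]
  · rw [mul_comm a1' d']
    exact sub_mul_div_sub_add_self hne _
  · rw [mul_comm a1' d']
    exact sub_mul_div_sub_add_self hne.symm _

/-- Integrability of the glued charge-2 data `⊞_L`: given charge-1 blown-up scalar data
`(a1', a2', d', b', c')` with `b'·c' = 0` and charge-1 plane data `(a1'', a2'', b'', c'')`
with `b''·c'' = 0`, `|a1'' − z1| < δ` and `d'·a1' ≠ a1''`, the glued 2×2 configuration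
satisfies the blow-up integrability condition `a1 d a2 − a2 d a1 + bc = 0`, and `bc` has
off-diagonal entries `b'·c''`, `b''·c'` and diagonal entries `b'·c'`, `b''·c''`. -/
theorem stmt15 {r : ℕ} (z1 : ℂ) (δ : ℝ) (hz1 : z1 ≠ 0)
    (a1' a2' d' a1'' a2'' : ℂ) (hδ : ‖a1'' - z1‖ < δ)
    (hne : d' * a1' ≠ a1'')
    (b' b'' c' c'' : Fin r → ℂ)
    (h' : b' ⬝ᵥ c' = 0) (h'' : b'' ⬝ᵥ c'' = 0) :
    let a1 : Matrix (Fin 2) (Fin 2) ℂ := !![a1', 0; 0, a1'']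
    let a2 : Matrix (Fin 2) (Fin 2) ℂ :=
      !![a2', (b' ⬝ᵥ c'') / (a1'' - d' * a1');
         (b'' ⬝ᵥ c') / (d' * a1' - a1''), a2'']
    let d : Matrix (Fin 2) (Fin 2) ℂ := !![d', 0; 0, 1]
    let b : Matrix (Fin 2) (Fin r) ℂ := Matrix.of ![b', b'']
    let c : Matrix (Fin r) (Fin 2) ℂ := (Matrix.of ![c', c''])ᵀ
    a1 * d * a2 - a2 * d * a1 + b * c = 0 ∧
      (b * c) 0 1 = b' ⬝ᵥ c'' ∧ (b * c) 1 0 = b'' ⬝ᵥ c' ∧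
      (b * c) 0 0 = b' ⬝ᵥ c' ∧ (b * c) 1 1 = b'' ⬝ᵥ c'' :=
  stmt15_general a1' a2' d' a1'' a2'' hne b' b'' c' c'' h' h''
end

section
/- Let m_L = (a_{1L}, a_{2L}, b_L, c_L) and m_R = (a_{1R}, a_{2R}, b_R, c_R) be charge-1 ADHM data (scalars a's, b's ∈ ℂ^r, c's ∈ ℂ^r, with b_L·c_L = 0 and b_R·c_R = 0) with a_{1L} ≠ a_{1R}. Define the 2×2 glued data m_L ⊞_0 m_R by a1 = diag(a_{1L}, a_{1R}), a2 = [[a_{2L}, (b_L·c_R)/(a_{1R}−a_{1L})],[(b_R·c_L)/(a_{1L}−a_{1R}), a_{2R}]], b the 2×r matrix with rows b_L, b_R, c the r×2 matrix with columns c_L, c_R. Then [a1, a2] + bc = 0. -/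
/-!
Conjugating by the diagonal matrix `a1 = diag(d)` scales the `(i, j)` entry of `a2` by
`d i - d j`, so `[a1, a2]` vanishes on the diagonal, where `b c` vanishes because each summand
satisfies `b_i · c_i = 0`, and off the diagonal the entries `(b_i · c_j) / (d j - d i)` of `a2` are
chosen exactly so that the commutator cancels `b_i · c_j`.
-/

open Matrix

namespace Matrix

variable {ι K : Type*} [Fintype ι] [DecidableEq ι] [Field K]

theorem diagonal_mul_sub_mul_diagonal_apply (d : ι → K) (A : Matrix ι ι K) (i j : ι) :
    (diagonal d * A - A * diagonal d) i j = (d i - d j) * A i j := by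
  rw [sub_apply, diagonal_mul, mul_diagonal, sub_mul, mul_comm (A i j)]

theorem diagonal_mul_sub_mul_diagonal_add_mul_eq_zero {d : ι → K} (hd : Function.Injective d)
    {A : Matrix ι ι K} {r : Type*} [Fintype r] {B : Matrix ι r K} {C : Matrix r ι K}
    (hBC : ∀ i, (B * C) i i = 0)
    (hA : ∀ i j, i ≠ j → A i j = (B * C) i j / (d j - d i)) :
    diagonal d * A - A * diagonal d + B * C = 0 := by
  ext i j
  rw [add_apply, diagonal_mul_sub_mul_diagonal_apply, zero_apply]
  by_cases hij : i = j
  · rw [hij, sub_self, zero_mul, zero_add, hBC]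
  · have hd : d j - d i ≠ 0 := sub_ne_zero.mpr (hd.ne (Ne.symm hij))
    rw [hA i j hij, ← neg_sub (d j), neg_mul, mul_div_cancel₀ _ hd, neg_add_cancel]

end Matrix

/-- ADHM integrability of the glued charge-2 data `m_L ⊞_0 m_R`: given charge-1 ADHM data
`(a_{1L}, a_{2L}, b_L, c_L)` and `(a_{1R}, a_{2R}, b_R, c_R)` with `b_L·c_L = 0`,
`b_R·c_R = 0` and `a_{1L} ≠ a_{1R}`, the glued configuration satisfies
`[a1, a2] + bc = 0`. -/
theorem stmt16 {r : ℕ} (a1L a2L a1R a2R : ℂ) (hne : a1L ≠ a1R)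
    (bL cL bR cR : Fin r → ℂ) (hL : bL ⬝ᵥ cL = 0) (hR : bR ⬝ᵥ cR = 0) :
    let a1 : Matrix (Fin 2) (Fin 2) ℂ := !![a1L, 0; 0, a1R]
    let a2 : Matrix (Fin 2) (Fin 2) ℂ :=
      !![a2L, (bL ⬝ᵥ cR) / (a1R - a1L);
         (bR ⬝ᵥ cL) / (a1L - a1R), a2R]
    let b : Matrix (Fin 2) (Fin r) ℂ := Matrix.of ![bL, bR]
    let c : Matrix (Fin r) (Fin 2) ℂ := (Matrix.of ![cL, cR])ᵀ
    a1 * a2 - a2 * a1 + b * c = 0 := by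
  intro a1 a2 b c
  have ha1 : a1 = diagonal ![a1L, a1R] := (diagonal_fin_two ![a1L, a1R]).symm
  have hbc : ∀ i j, (b * c) i j = ![bL, bR] i ⬝ᵥ ![cL, cR] j := fun i j => mul_apply' ..
  have hinj : Function.Injective ![a1L, a1R] := by
    intro i j hij
    fin_cases i <;> fin_cases j <;> simp_all [eq_comm]
  rw [ha1]
  refine diagonal_mul_sub_mul_diagonal_add_mul_eq_zero hinj (fun i => ?_) (fun i j hij => ?_)
  · fin_cases i <;> simp [hbc, hL, hR]
  · fin_cases i <;> fin_cases j <;> simp_all [a2]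
end

section
/- Let m_L, m_R be charge-1 ADHM data as above with a_{1L} ≠ a_{1R}, and form m = m_L ⊞_0 m_R. Then m is degenerate (i.e. admits a nonzero c-special subspace or a proper b-special subspace) if and only if at least one of the four vectors b_L, b_R, c_L, c_R ∈ ℂ^r is zero. -/
/-!
Since `a₁ = diag(a_{1L}, a_{1R})` has distinct eigenvalues, every `a₁`-invariant subspace is
spanned by the coordinate vectors it contains. So a proper b-special subspace lies in a
coordinate hyperplane, which forces a row of `b` (that is, `b_L` or `b_R`) to vanish, and a
nonzero c-special subspace contains a coordinate vector, which forces a column of `c` (`c_L` or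
`c_R`) to vanish. Conversely, if one of the four vectors is zero then so is the off-diagonal
entry of `a₂` coupling the two coordinates in the relevant direction, and the corresponding
coordinate line is a proper b-special or a nonzero c-special subspace.
-/

open Matrix

/-- `W' ⊆ ℂ²` is b-special for charge-2 ADHM data `(a1, a2, b, c)`:
invariant under `a1, a2` and containing `Im b`. -/
def IsBSpecial {r : ℕ} (a1 a2 : Matrix (Fin 2) (Fin 2) ℂ)
    (b : Matrix (Fin 2) (Fin r) ℂ) (W' : Submodule ℂ (Fin 2 → ℂ)) : Prop :=
  W'.map a1.mulVecLin ≤ W' ∧ W'.map a2.mulVecLin ≤ W' ∧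
    LinearMap.range b.mulVecLin ≤ W'

/-- `W' ⊆ ℂ²` is c-special for charge-2 ADHM data `(a1, a2, b, c)`:
invariant under `a1, a2` and contained in `Ker c`. -/
def IsCSpecial {r : ℕ} (a1 a2 : Matrix (Fin 2) (Fin 2) ℂ)
    (c : Matrix (Fin r) (Fin 2) ℂ) (W' : Submodule ℂ (Fin 2 → ℂ)) : Prop :=
  W'.map a1.mulVecLin ≤ W' ∧ W'.map a2.mulVecLin ≤ W' ∧
    W' ≤ LinearMap.ker c.mulVecLin

/-- Charge-2 ADHM data is degenerate iff it admits a proper b-special subspace or a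
nonzero c-special subspace. -/
def IsDegenerate {r : ℕ} (a1 a2 : Matrix (Fin 2) (Fin 2) ℂ)
    (b : Matrix (Fin 2) (Fin r) ℂ) (c : Matrix (Fin r) (Fin 2) ℂ) : Prop :=
  (∃ W', IsBSpecial a1 a2 b W' ∧ W' ≠ ⊤) ∨ (∃ W', IsCSpecial a1 a2 c W' ∧ W' ≠ ⊥)

section

variable {K m n : Type*} [Field K]

theorem range_mulVecLin_le_ker_proj_iff [Fintype m] (b : Matrix n m K) (i : n) :
    LinearMap.range b.mulVecLin ≤ LinearMap.ker (LinearMap.proj i) ↔ b i = 0 := by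
  rw [← dotProduct_eq_zero_iff, LinearMap.range_le_iff_comap, Submodule.eq_top_iff']
  simp [mulVec]

variable [Fintype n]

theorem map_mulVecLin_ker_proj_le {M : Matrix n n K} {i : n} (h : ∀ j ≠ i, M i j = 0) :
    (LinearMap.ker (LinearMap.proj i)).map M.mulVecLin ≤ LinearMap.ker (LinearMap.proj i) := by
  rintro _ ⟨v, hv, rfl⟩
  have hvi : v i = 0 := hv
  change (M *ᵥ v) i = 0
  rw [mulVec, dotProduct, Finset.sum_eq_single i (fun j _ hj => by simp [h j hj]) (by simp),
    hvi, mul_zero]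

variable [DecidableEq n]

theorem span_single_le_ker_mulVecLin_iff (c : Matrix m n K) (j : n) :
    K ∙ Pi.single j 1 ≤ LinearMap.ker c.mulVecLin ↔ cᵀ j = 0 := by
  rw [Submodule.span_singleton_le_iff_mem, LinearMap.mem_ker, mulVecLin_apply, mulVec_single_one]
  rfl

theorem map_mulVecLin_span_single_le {M : Matrix n n K} {j : n} (h : ∀ i ≠ j, M i j = 0) :
    (K ∙ Pi.single j 1).map M.mulVecLin ≤ K ∙ Pi.single j 1 := by
  rw [Submodule.map_span_le]
  rintro _ rfl
  refine Submodule.mem_span_singleton.2 ⟨M j j, funext fun i => ?_⟩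
  by_cases hi : i = j
  · subst hi; simp
  · simp [hi, h i hi]

theorem single_one_mem_of_map_diagonal_le {d : n → K} (hd : Function.Injective d)
    {W : Submodule K (n → K)} (hW : W.map (diagonal d).mulVecLin ≤ W) {w : n → K}
    (hw : w ∈ W) {i : n} (hi : w i ≠ 0) : Pi.single i 1 ∈ W := by
  -- `∏ j ∈ s, (diagonal d - d j)` preserves `W`; for `s = univ.erase i` it kills every
  -- coordinate of `w` but the `i`-th.
  have hprod : ∀ s : Finset n, (fun k => (∏ j ∈ s, (d k - d j)) * w k) ∈ W := by
    intro s
    induction s using Finset.induction_on with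
    | empty => simpa using hw
    | insert a s ha ih =>
      have hstep : (fun k => (∏ j ∈ insert a s, (d k - d j)) * w k) =
          (diagonal d).mulVecLin (fun k => (∏ j ∈ s, (d k - d j)) * w k) -
            d a • fun k => (∏ j ∈ s, (d k - d j)) * w k := by
        funext k
        simp only [Finset.prod_insert ha, mulVecLin_apply, mulVec_diagonal, Pi.sub_apply,
          Pi.smul_apply, smul_eq_mul]
        ring
      rw [hstep]
      exact W.sub_mem (hW ⟨_, ih, rfl⟩) (W.smul_mem _ ih)
  have hsingle : (fun k => (∏ j ∈ Finset.univ.erase i, (d k - d j)) * w k) =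
      ((∏ j ∈ Finset.univ.erase i, (d i - d j)) * w i) • Pi.single i 1 := by
    funext k
    by_cases hk : k = i
    · subst hk
      simp
    · rw [Finset.prod_eq_zero_iff.2 ⟨k, by simp [hk], sub_self _⟩, zero_mul, Pi.smul_apply,
        Pi.single_eq_of_ne hk, smul_zero]
  have hne : (∏ j ∈ Finset.univ.erase i, (d i - d j)) * w i ≠ 0 :=
    mul_ne_zero (Finset.prod_ne_zero_iff.2 fun j hj =>
      sub_ne_zero.2 (hd.ne (Finset.ne_of_mem_erase hj).symm)) hi
  have := W.smul_mem ((∏ j ∈ Finset.univ.erase i, (d i - d j)) * w i)⁻¹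
    (hprod (Finset.univ.erase i))
  rwa [hsingle, inv_smul_smul₀ hne] at this

theorem exists_le_ker_proj_of_map_diagonal_le {d : n → K} (hd : Function.Injective d)
    {W : Submodule K (n → K)} (hW : W.map (diagonal d).mulVecLin ≤ W) (htop : W ≠ ⊤) :
    ∃ i, W ≤ LinearMap.ker (LinearMap.proj i) := by
  by_contra! h
  refine htop (Submodule.eq_top_iff'.2 fun v => ?_)
  rw [pi_eq_sum_univ' v]
  refine W.sum_mem fun i _ => W.smul_mem _ ?_
  obtain ⟨w, hw, hwi⟩ := SetLike.not_le_iff_exists.1 (h i)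
  exact single_one_mem_of_map_diagonal_le hd hW hw hwi

theorem exists_single_one_mem_of_map_diagonal_le {d : n → K} (hd : Function.Injective d)
    {W : Submodule K (n → K)} (hW : W.map (diagonal d).mulVecLin ≤ W) (hbot : W ≠ ⊥) :
    ∃ i, Pi.single i 1 ∈ W := by
  obtain ⟨w, hw, hw0⟩ := Submodule.exists_mem_ne_zero_of_ne_bot hbot
  obtain ⟨i, hi⟩ := Function.ne_iff.1 hw0
  exact ⟨i, single_one_mem_of_map_diagonal_le hd hW hw hi⟩

end

theorem IsDegenerate.exists_row_or_col_eq_zero {r : ℕ} {d : Fin 2 → ℂ}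
    (hd : Function.Injective d) {a2 : Matrix (Fin 2) (Fin 2) ℂ} {b : Matrix (Fin 2) (Fin r) ℂ}
    {c : Matrix (Fin r) (Fin 2) ℂ} (h : IsDegenerate (diagonal d) a2 b c) :
    (∃ i, b i = 0) ∨ ∃ j, cᵀ j = 0 := by
  rcases h with ⟨W, ⟨hdW, -, hbW⟩, htop⟩ | ⟨W, ⟨hdW, -, hcW⟩, hbot⟩
  · obtain ⟨i, hi⟩ := exists_le_ker_proj_of_map_diagonal_le hd hdW htop
    exact Or.inl ⟨i, (range_mulVecLin_le_ker_proj_iff b i).1 (hbW.trans hi)⟩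
  · obtain ⟨j, hj⟩ := exists_single_one_mem_of_map_diagonal_le hd hdW hbot
    exact Or.inr ⟨j, (span_single_le_ker_mulVecLin_iff c j).1
      (((Submodule.span_singleton_le_iff_mem _ _).2 hj).trans hcW)⟩

theorem isDegenerate_of_row_eq_zero {r : ℕ} {a1 a2 : Matrix (Fin 2) (Fin 2) ℂ}
    {b : Matrix (Fin 2) (Fin r) ℂ} {c : Matrix (Fin r) (Fin 2) ℂ} (i : Fin 2)
    (h1 : ∀ j ≠ i, a1 i j = 0) (h2 : ∀ j ≠ i, a2 i j = 0) (hb : b i = 0) :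
    IsDegenerate a1 a2 b c := by
  refine Or.inl ⟨_, ⟨map_mulVecLin_ker_proj_le h1, map_mulVecLin_ker_proj_le h2,
    (range_mulVecLin_le_ker_proj_iff b i).2 hb⟩, fun htop => ?_⟩
  have : Pi.single i (1 : ℂ) ∈ LinearMap.ker (LinearMap.proj i) := htop ▸ Submodule.mem_top
  simp at this

theorem isDegenerate_of_col_eq_zero {r : ℕ} {a1 a2 : Matrix (Fin 2) (Fin 2) ℂ}
    {b : Matrix (Fin 2) (Fin r) ℂ} {c : Matrix (Fin r) (Fin 2) ℂ} (j : Fin 2)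
    (h1 : ∀ i ≠ j, a1 i j = 0) (h2 : ∀ i ≠ j, a2 i j = 0) (hc : cᵀ j = 0) :
    IsDegenerate a1 a2 b c :=
  Or.inr ⟨_, ⟨map_mulVecLin_span_single_le h1, map_mulVecLin_span_single_le h2,
    (span_single_le_ker_mulVecLin_iff c j).2 hc⟩, by simp⟩

theorem stmt17_general {r : ℕ} (a1L a2L a1R a2R : ℂ) (hne : a1L ≠ a1R)
    (bL cL bR cR : Fin r → ℂ) :
    let a1 : Matrix (Fin 2) (Fin 2) ℂ := !![a1L, 0; 0, a1R]
    let a2 : Matrix (Fin 2) (Fin 2) ℂ :=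
      !![a2L, (bL ⬝ᵥ cR) / (a1R - a1L);
         (bR ⬝ᵥ cL) / (a1L - a1R), a2R]
    let b : Matrix (Fin 2) (Fin r) ℂ := Matrix.of ![bL, bR]
    let c : Matrix (Fin r) (Fin 2) ℂ := (Matrix.of ![cL, cR])ᵀ
    (IsDegenerate a1 a2 b c ↔ bL = 0 ∨ bR = 0 ∨ cL = 0 ∨ cR = 0) := by
  intro a1 a2 b c
  have hd : Function.Injective ![a1L, a1R] := by
    intro i j
    fin_cases i <;> fin_cases j <;> simp [hne, hne.symm]
  constructor
  · intro h
    rw [show a1 = diagonal ![a1L, a1R] by rw [diagonal_fin_two]; rfl] at h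
    rcases h.exists_row_or_col_eq_zero hd with ⟨i, hi⟩ | ⟨j, hj⟩
    · fin_cases i
      exacts [Or.inl hi, Or.inr (Or.inl hi)]
    · fin_cases j
      exacts [Or.inr (Or.inr (Or.inl hj)), Or.inr (Or.inr (Or.inr hj))]
  · rintro (h | h | h | h)
    · exact isDegenerate_of_row_eq_zero 0 (by simp [a1]) (by simp [a2, h]) h
    · exact isDegenerate_of_row_eq_zero 1 (by simp [a1]) (by simp [a2, h]) h
    · exact isDegenerate_of_col_eq_zero 0 (by simp [a1]) (by simp [a2, h]) h
    · exact isDegenerate_of_col_eq_zero 1 (by simp [a1]) (by simp [a2, h]) h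

/-- The glued charge-2 data `m_L ⊞_0 m_R` (with `a_{1L} ≠ a_{1R}`) is degenerate if and
only if at least one of the four vectors `b_L, b_R, c_L, c_R` is zero. -/
theorem stmt17 {r : ℕ} (a1L a2L a1R a2R : ℂ) (hne : a1L ≠ a1R)
    (bL cL bR cR : Fin r → ℂ) (hL : bL ⬝ᵥ cL = 0) (hR : bR ⬝ᵥ cR = 0) :
    let a1 : Matrix (Fin 2) (Fin 2) ℂ := !![a1L, 0; 0, a1R]
    let a2 : Matrix (Fin 2) (Fin 2) ℂ :=
      !![a2L, (bL ⬝ᵥ cR) / (a1R - a1L);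
         (bR ⬝ᵥ cL) / (a1L - a1R), a2R]
    let b : Matrix (Fin 2) (Fin r) ℂ := Matrix.of ![bL, bR]
    let c : Matrix (Fin r) (Fin 2) ℂ := (Matrix.of ![cL, cR])ᵀ
    (IsDegenerate a1 a2 b c ↔ bL = 0 ∨ bR = 0 ∨ cL = 0 ∨ cR = 0) :=
  stmt17_general a1L a2L a1R a2R hne bL cL bR cR
end
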